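/- Let f : ℝ≥0 → ℝ≥0 be continuous with f(0) = 0 and compact support, and suppose sup f ≥ h for some h > 0 (so the h-trimming of the real tree T_f coded by f is non-empty). Then the h-trimming Tr^h(T_f) := {x ∈ T_f : sup_{y ⪰ x} d_f(x,y) ≥ h} is isometric, via a root-preserving isometry, to the real tree T_{f_h} coded by the h-cut f_h := f − Λ_{0,h}(f). -/

import Mathlib

open Set
open scoped NNReal ENNReal

/-- Solution data for the two-sided Skorohod reflection problem of `f` on `[0,h]`:
`c0` and `ch` are the compensators at `0` and at `h`,
and `fun t => f t + ch t + c0 t` is the reflected path `Λ_{0,h}(f)`.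
The support conditions on the measures `dc⁰` and `d(−cʰ)` are phrased as:
the compensator is constant on every (closed) interval on which the reflected
path avoids the corresponding boundary. -/
structure SkorohodPair (h : ℝ) (f c0 ch : ℝ≥0 → ℝ) : Prop where
  cont0 : Continuous c0
  conth : Continuous ch
  init0 : c0 0 = 0
  inith : ch 0 = 0
  mem_Icc : ∀ t, f t + ch t + c0 t ∈ Set.Icc (0 : ℝ) h
  mono0 : Monotone c0
  antih : Antitone ch
  flat0 : ∀ a b : ℝ≥0, a ≤ b → (∀ t ∈ Set.Icc a b, f t + ch t + c0 t ≠ 0) → c0 b = c0 a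
  flath : ∀ a b : ℝ≥0, a ≤ b → (∀ t ∈ Set.Icc a b, f t + ch t + c0 t ≠ h) → ch b = ch a

/-- The pseudo-distance `d_f(s,t) = f s + f t − 2 inf_{[s∧t, s∨t]} f` on times; the real
tree `T_f` coded by `f` is the quotient of `ℝ≥0` by `d_f = 0`, with projection `p_f` and
root `p_f 0`. -/
noncomputable def treeDist (f : ℝ≥0 → ℝ) (s t : ℝ≥0) : ℝ :=
  f s + f t - 2 * sInf (f '' Set.Icc (min s t) (max s t))

/-- `ancT f a b` means `p_f a ⪯ p_f b` in the tree coded by `f`, i.e.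
`inf_{[a∧b, a∨b]} f = f a`. -/
def ancT (f : ℝ≥0 → ℝ) (a b : ℝ≥0) : Prop :=
  sInf (f '' Set.Icc (min a b) (max a b)) = f a

/-- `p_f t` belongs to the `h`-trimming `Tr^h(T_f)`, i.e.
`sup { d_f(p_f t, y) : y ⪰ p_f t } ≥ h`. -/
def TrimTime (h : ℝ) (f : ℝ≥0 → ℝ) (t : ℝ≥0) : Prop :=
  h ≤ sSup ((fun s => treeDist f t s) '' {s | ancT f t s})

/-!
Write `g = f - Λ_{0,h}(f) = -(cʰ + c⁰)`. As `c⁰` only grows while `Λ = 0` and `cʰ` only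
decreases while `Λ = h`, `g` is nondecreasing after the last zero of `Λ` before any time and
nonincreasing after the last visit of `Λ` to `h`. A time `t` codes a point of the trimming iff
some `v` with `f ≥ f t` on `[t ∧ v, t ∨ v]` has `f v ≥ f t + h`; then `g` reaches the level
`f t` at a first time `φ t ≥ t`, and `f ≥ f t` on `[t, φ t]`. Hence `φ` is monotone on trimming
times, `g (φ t) = f t` and `inf_{[φ s, φ t]} g = inf_{[s, t]} f`, so `φ` is an isometry. For
surjectivity, the last time `s ≤ u` with `f s = g u` is a trimming time, `φ s ≤ u`, and
`g ≥ g u` on `[φ s, u]`.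
-/

open Filter

section OrderTopology

variable {α δ : Type*} [ConditionallyCompleteLinearOrder α] [LinearOrder δ]

noncomputable def firstReach (G : α → δ) (c : δ) (t : α) : α :=
  sInf {u | t ≤ u ∧ c ≤ G u}

theorem firstReach_le {G : α → δ} {c : δ} {t u : α} (htu : t ≤ u) (hu : c ≤ G u) :
    firstReach G c t ≤ u :=
  csInf_le ⟨t, fun _ hv => hv.1⟩ ⟨htu, hu⟩

variable [TopologicalSpace α] [OrderTopology α]

theorem isClosed_ordConnectedComponent {s : Set α} (hs : IsClosed s) (x : α) :
    IsClosed (ordConnectedComponent s x) := by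
  refine isClosed_of_closure_subset fun y hy => mem_ordConnectedComponent.2 fun z hz => ?_
  rcases lt_trichotomy z y with hzy | rfl | hyz
  · obtain ⟨y', hzy', hy'⟩ := mem_closure_iff_nhds.1 hy _ (Ioi_mem_nhds hzy)
    have hxz : x ≤ z := by
      rcases mem_uIcc.1 hz with h | h
      · exact h.1
      · exact absurd h.1 (not_le.2 hzy)
    exact mem_ordConnectedComponent.1 hy' (Icc_subset_uIcc ⟨hxz, le_of_lt hzy'⟩)
  · exact closure_minimal (fun _ hw => ordConnectedComponent_subset hw) hs hy
  · obtain ⟨y', hzy', hy'⟩ := mem_closure_iff_nhds.1 hy _ (Iio_mem_nhds hyz)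
    have hzx : z ≤ x := by
      rcases mem_uIcc.1 hz with h | h
      · exact absurd h.2 (not_le.2 hyz)
      · exact h.2
    exact mem_ordConnectedComponent.1 hy' (Icc_subset_uIcc' ⟨le_of_lt hzy', hzx⟩)

variable [DenselyOrdered α]

theorem exists_last_eqOn_of_flat {β : Type*} [TopologicalSpace β] [T2Space β]
    {Z : Set α} (hZ : IsClosed Z) {c : α → β} (hc : Continuous c)
    (hflat : ∀ a b, a ≤ b → (∀ t ∈ Icc a b, t ∉ Z) → c b = c a) {b : α}
    (hne : (Z ∩ Iic b).Nonempty) : ∃ z ∈ Z, z ≤ b ∧ EqOn c (fun _ => c b) (Icc z b) := by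
  have hbdd : BddAbove (Z ∩ Iic b) := ⟨b, fun _ hy => hy.2⟩
  obtain ⟨hzZ, hzb⟩ := (hZ.inter isClosed_Iic).csSup_mem hne hbdd
  refine ⟨_, hzZ, hzb, ?_⟩
  have hIoc : EqOn c (fun _ => c b) (Ioc (sSup (Z ∩ Iic b)) b) := fun p hp =>
    (hflat p b hp.2 fun y hy hyZ =>
      (hp.1.trans_le hy.1).not_ge (le_csSup hbdd ⟨hyZ, hy.2⟩)).symm
  rcases hzb.eq_or_lt with heq | hlt
  · rw [heq, Icc_self]
    exact fun p hp => congrArg c hp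
  · rw [← closure_Ioc hlt.ne]
    exact hIoc.closure hc continuous_const

variable [TopologicalSpace δ] [OrderClosedTopology δ]

theorem exists_last_eq_of_le {F : α → δ} (hF : Continuous F) {a u : α} (hau : a ≤ u) {c : δ}
    (ha : F a ≤ c) (hu : c ≤ F u) : ∃ s ∈ Icc a u, F s = c ∧ ∀ x ∈ Icc s u, c ≤ F x := by
  set S := Icc a u ∩ F ⁻¹' Iic c
  have hbdd : BddAbove S := ⟨u, fun _ hx => hx.1.2⟩
  obtain ⟨hs, hsc⟩ := (isClosed_Icc.inter (isClosed_Iic.preimage hF)).csSup_mem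
    ⟨a, ⟨le_rfl, hau⟩, ha⟩ hbdd
  obtain ⟨y, hy, hyc⟩ := intermediate_value_Icc hs.2 hF.continuousOn ⟨hsc, hu⟩
  have hys : y ≤ sSup S := le_csSup hbdd ⟨⟨hs.1.trans hy.1, hy.2⟩, hyc.le⟩
  have hFs : F (sSup S) = c := le_antisymm hy.1 hys ▸ hyc
  refine ⟨sSup S, hs, hFs, fun x hx => ?_⟩
  by_contra! hlt
  rcases hx.1.eq_or_lt with rfl | hsx
  · exact hlt.ne hFs
  · exact hsx.not_ge (le_csSup hbdd ⟨⟨hs.1.trans hx.1, hx.2⟩, hlt.le⟩)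

theorem firstReach_spec {G : α → δ} (hG : Continuous G) {c : δ} {t u : α}
    (ht : G t ≤ c) (htu : t ≤ u) (hu : c ≤ G u) :
    t ≤ firstReach G c t ∧ G (firstReach G c t) = c := by
  obtain ⟨htφ, hcφ⟩ : t ≤ firstReach G c t ∧ c ≤ G (firstReach G c t) :=
    (isClosed_Ici.inter (isClosed_Ici.preimage hG)).csInf_mem ⟨u, htu, hu⟩
      ⟨t, fun _ hv => hv.1⟩
  obtain ⟨y, hy, hyc⟩ := intermediate_value_Icc htφ hG.continuousOn ⟨ht, hcφ⟩
  have hφy : firstReach G c t ≤ y := firstReach_le hy.1 hyc.ge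
  exact ⟨htφ, le_antisymm hy.2 hφy ▸ hyc⟩

end OrderTopology

section CodedTree

variable {f : ℝ≥0 → ℝ}

theorem treeDist_comm (f : ℝ≥0 → ℝ) (s t : ℝ≥0) : treeDist f s t = treeDist f t s := by
  simp only [treeDist, min_comm s t, max_comm s t]
  ring

theorem treeDist_of_le {s t : ℝ≥0} (hst : s ≤ t) :
    treeDist f s t = f s + f t - 2 * sInf (f '' Icc s t) := by
  rw [treeDist, min_eq_left hst, max_eq_right hst]

theorem treeDist_zero_right (hpos : ∀ t, 0 ≤ f t) (hf0 : f 0 = 0) (s : ℝ≥0) :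
    treeDist f s 0 = f s := by
  have hinf : sInf (f '' Icc 0 s) = 0 :=
    IsLeast.csInf_eq ⟨⟨0, left_mem_Icc.2 zero_le, hf0⟩, forall_mem_image.2 fun y _ => hpos y⟩
  rw [treeDist_comm, treeDist_of_le zero_le, hinf, hf0]
  ring

theorem ancT_iff (hf : Continuous f) {t x : ℝ≥0} :
    ancT f t x ↔ x ∈ ordConnectedComponent {y | f t ≤ f y} t := by
  change sInf (f '' uIcc t x) = f t ↔ _
  rw [mem_ordConnectedComponent]
  refine ⟨fun h y hy => ?_, fun h => ?_⟩
  · exact h ▸ csInf_le (isCompact_uIcc.image hf).bddBelow (mem_image_of_mem f hy)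
  · exact IsLeast.csInf_eq ⟨mem_image_of_mem f left_mem_uIcc, forall_mem_image.2 h⟩

theorem treeDist_of_ancT {t x : ℝ≥0} (h : ancT f t x) : treeDist f t x = f x - f t := by
  have h' : sInf (f '' Icc (min t x) (max t x)) = f t := h
  rw [treeDist, h']
  ring

theorem eventually_cocompact_eq_zero {K : ℝ≥0} (hK : ∀ t, K ≤ t → f t = 0) :
    ∀ᶠ x in cocompact ℝ≥0, f x = 0 :=
  mem_of_superset (isCompact_Icc (a := 0) (b := K)).compl_mem_cocompact fun x hx =>
    hK x (not_le.1 fun hxK => hx ⟨zero_le, hxK⟩).le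

theorem trimTime_iff (hf : Continuous f) (hpos : ∀ t, 0 ≤ f t) {K : ℝ≥0}
    (hK : ∀ t, K ≤ t → f t = 0) {h : ℝ} {t : ℝ≥0} :
    TrimTime h f t ↔ ∃ v ∈ ordConnectedComponent {y | f t ≤ f y} t, f t + h ≤ f v := by
  set D := ordConnectedComponent {y | f t ≤ f y} t
  have htD : t ∈ D := self_mem_ordConnectedComponent.2 (le_refl (f t))
  have hanc : {s | ancT f t s} = D := ext fun x => ancT_iff hf
  unfold TrimTime
  rw [hanc, image_congr fun x hx => treeDist_of_ancT ((ancT_iff hf).2 hx)]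
  obtain ⟨v, hvD, hvmax⟩ := hf.continuousOn.exists_isMaxOn'
    (isClosed_ordConnectedComponent (isClosed_le continuous_const hf) t) htD
    (((eventually_cocompact_eq_zero hK).filter_mono inf_le_left).mono fun x hx =>
      hx ▸ hpos t)
  have hbdd : ∀ x ∈ D, f x - f t ≤ f v - f t := fun x hx => sub_le_sub_right (hvmax hx) _
  constructor
  · intro hh
    have hv := hh.trans (csSup_le ⟨_, mem_image_of_mem _ htD⟩ (forall_mem_image.2 hbdd))
    exact ⟨v, hvD, by linarith⟩
  · rintro ⟨w, hwD, hw⟩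
    calc h ≤ f w - f t := by linarith
      _ ≤ _ := le_csSup ⟨_, forall_mem_image.2 hbdd⟩ (mem_image_of_mem _ hwD)

theorem trimTime_of_eq_zero (hf : Continuous f) (hpos : ∀ t, 0 ≤ f t) {K : ℝ≥0}
    (hK : ∀ t, K ≤ t → f t = 0) {h : ℝ} (hsup : h ≤ sSup (range f)) {s : ℝ≥0} (hs : f s = 0) :
    TrimTime h f s := by
  obtain ⟨v, hv⟩ := hf.exists_forall_ge' 0
    ((eventually_cocompact_eq_zero hK).mono fun x hx => hx ▸ hpos 0)
  refine (trimTime_iff hf hpos hK).2 ⟨v, mem_ordConnectedComponent.2 fun y _ => hs ▸ hpos y, ?_⟩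
  rw [hs, zero_add]
  exact hsup.trans (csSup_le (range_nonempty f) (forall_mem_range.2 hv))

end CodedTree

noncomputable def hCut (f c0 ch : ℝ≥0 → ℝ) : ℝ≥0 → ℝ := fun v => f v - (f v + ch v + c0 v)

namespace SkorohodPair

variable {h : ℝ} {f c0 ch : ℝ≥0 → ℝ}

theorem continuous_path (hp : SkorohodPair h f c0 ch) (hf : Continuous f) :
    Continuous fun v => f v + ch v + c0 v :=
  (hf.add hp.conth).add hp.cont0

theorem continuous_hCut (hp : SkorohodPair h f c0 ch) (hf : Continuous f) :
    Continuous (hCut f c0 ch) :=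
  hf.sub (hp.continuous_path hf)

theorem hCut_le (hp : SkorohodPair h f c0 ch) (v : ℝ≥0) : hCut f c0 ch v ≤ f v := by
  have := (hp.mem_Icc v).1
  simp only [hCut]
  linarith

theorem sub_le_hCut (hp : SkorohodPair h f c0 ch) (v : ℝ≥0) : f v - h ≤ hCut f c0 ch v := by
  have := (hp.mem_Icc v).2
  simp only [hCut]
  linarith

theorem hCut_zero (hp : SkorohodPair h f c0 ch) (hf0 : f 0 = 0) : hCut f c0 ch 0 = 0 := by
  simp only [hCut, hf0, hp.init0, hp.inith]
  ring

theorem exists_last_zero (hp : SkorohodPair h f c0 ch) (hf : Continuous f) (hf0 : f 0 = 0)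
    (b : ℝ≥0) :
    ∃ z ≤ b, hCut f c0 ch z = f z ∧ ∀ p ∈ Icc z b, hCut f c0 ch p ≤ hCut f c0 ch b := by
  have h0 : f 0 + ch 0 + c0 0 = 0 := by rw [hf0, hp.init0, hp.inith]; ring
  obtain ⟨z, hz, hzb, hc0⟩ := exists_last_eqOn_of_flat
    (isClosed_singleton.preimage (hp.continuous_path hf)) hp.cont0 hp.flat0 (b := b)
    ⟨0, h0, (zero_le : 0 ≤ b)⟩
  refine ⟨z, hzb, ?_, fun p hpb => ?_⟩
  · have hz' : f z + ch z + c0 z = 0 := hz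
    simp only [hCut, hz', sub_zero]
  · have hc : c0 p = c0 b := hc0 hpb
    have hch := hp.antih hpb.2
    simp only [hCut]
    linarith

theorem exists_last_top (hp : SkorohodPair h f c0 ch) (hf : Continuous f) {b : ℝ≥0}
    (hb : 0 < hCut f c0 ch b) :
    ∃ w ≤ b, hCut f c0 ch w = f w - h ∧ ∀ p ∈ Icc w b, hCut f c0 ch b ≤ hCut f c0 ch p := by
  have hZ := isClosed_singleton.preimage (hp.continuous_path hf) (t := {h})
  have hne : ((fun v => f v + ch v + c0 v) ⁻¹' {h} ∩ Iic b).Nonempty := by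
    by_contra hempty
    have hchb : ch b = ch 0 :=
      hp.flath 0 b zero_le fun t ht htZ => hempty ⟨t, htZ, ht.2⟩
    have hc0 := hp.mono0 (zero_le : 0 ≤ b)
    simp only [hCut, hchb, hp.inith, hp.init0] at hb hc0
    linarith
  obtain ⟨w, hw, hwb, hch⟩ := exists_last_eqOn_of_flat hZ hp.conth hp.flath hne
  refine ⟨w, hwb, ?_, fun p hpb => ?_⟩
  · have hw' : f w + ch w + c0 w = h := hw
    simp only [hCut, hw']
  · have hc : ch p = ch b := hch hpb
    have hc0 := hp.mono0 hpb.2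
    simp only [hCut]
    linarith

theorem le_hCut_of_le (hp : SkorohodPair h f c0 ch) (hf : Continuous f) (hf0 : f 0 = 0)
    {a x : ℝ≥0} {c : ℝ} (hax : a ≤ x) (ha : c ≤ hCut f c0 ch a)
    (hfc : ∀ y ∈ Icc a x, c ≤ f y) : c ≤ hCut f c0 ch x := by
  obtain ⟨z, hzx, hz, hmono⟩ := hp.exists_last_zero hf hf0 x
  rcases le_total z a with hza | haz
  · exact ha.trans (hmono a ⟨hza, hax⟩)
  · calc c ≤ f z := hfc z ⟨haz, hzx⟩
      _ = hCut f c0 ch z := hz.symm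
      _ ≤ hCut f c0 ch x := hmono z ⟨le_rfl, hzx⟩

theorem hCut_nonneg (hp : SkorohodPair h f c0 ch) (hf : Continuous f) (hpos : ∀ t, 0 ≤ f t)
    (hf0 : f 0 = 0) (v : ℝ≥0) : 0 ≤ hCut f c0 ch v :=
  hp.le_hCut_of_le hf hf0 zero_le (hp.hCut_zero hf0).ge fun y _ => hpos y

theorem exists_reach_of_trimTime (hp : SkorohodPair h f c0 ch) (hf : Continuous f)
    (hpos : ∀ t, 0 ≤ f t) (hf0 : f 0 = 0) {K : ℝ≥0} (hK : ∀ t, K ≤ t → f t = 0) {t : ℝ≥0}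
    (ht : TrimTime h f t) : ∃ u, t ≤ u ∧ f t ≤ hCut f c0 ch u ∧ ∀ x ∈ Icc t u, f t ≤ f x := by
  obtain ⟨v, hvD, hv⟩ := (trimTime_iff hf hpos hK).1 ht
  have hD := mem_ordConnectedComponent.1 hvD
  have hv' : f t ≤ hCut f c0 ch v := by linarith [hp.sub_le_hCut v]
  rcases le_total t v with htv | hvt
  · exact ⟨v, htv, hv', fun x hx => hD (Icc_subset_uIcc hx)⟩
  · exact ⟨t, le_rfl, hp.le_hCut_of_le hf hf0 hvt hv' fun y hy => hD (Icc_subset_uIcc' hy),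
      fun x hx => hD (Icc_subset_uIcc' ⟨hvt.trans hx.1, hx.2⟩)⟩

theorem firstReach_spec_of_trimTime (hp : SkorohodPair h f c0 ch) (hf : Continuous f)
    (hpos : ∀ t, 0 ≤ f t) (hf0 : f 0 = 0) {K : ℝ≥0} (hK : ∀ t, K ≤ t → f t = 0) {t : ℝ≥0}
    (ht : TrimTime h f t) :
    t ≤ firstReach (hCut f c0 ch) (f t) t ∧ hCut f c0 ch (firstReach (hCut f c0 ch) (f t) t) = f t ∧
      ∀ x ∈ Icc t (firstReach (hCut f c0 ch) (f t) t), f t ≤ f x := by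
  obtain ⟨u, htu, hu, hfu⟩ := hp.exists_reach_of_trimTime hf hpos hf0 hK ht
  obtain ⟨htφ, hφ⟩ := firstReach_spec (hp.continuous_hCut hf) (hp.hCut_le t) htu hu
  exact ⟨htφ, hφ, fun x hx => hfu x ⟨hx.1, hx.2.trans (firstReach_le htu hu)⟩⟩

theorem firstReach_mono_of_trimTime (hp : SkorohodPair h f c0 ch) (hf : Continuous f)
    (hpos : ∀ t, 0 ≤ f t) (hf0 : f 0 = 0) {K : ℝ≥0} (hK : ∀ t, K ≤ t → f t = 0) {s t : ℝ≥0}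
    (hs : TrimTime h f s) (ht : TrimTime h f t) (hst : s ≤ t) :
    firstReach (hCut f c0 ch) (f s) s ≤ firstReach (hCut f c0 ch) (f t) t := by
  obtain ⟨-, -, hfs⟩ := hp.firstReach_spec_of_trimTime hf hpos hf0 hK hs
  obtain ⟨htφ, hφt, -⟩ := hp.firstReach_spec_of_trimTime hf hpos hf0 hK ht
  rcases le_total t (firstReach (hCut f c0 ch) (f s) s) with htφs | hφst
  · exact firstReach_le (hst.trans htφ) ((hfs t ⟨hst, htφs⟩).trans hφt.ge)
  · exact hφst.trans htφ

theorem treeDist_hCut_firstReach (hp : SkorohodPair h f c0 ch) (hf : Continuous f)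
    (hpos : ∀ t, 0 ≤ f t) (hf0 : f 0 = 0) {K : ℝ≥0} (hK : ∀ t, K ≤ t → f t = 0) {s t : ℝ≥0}
    (hs : TrimTime h f s) (ht : TrimTime h f t) (hst : s ≤ t) :
    treeDist (hCut f c0 ch) (firstReach (hCut f c0 ch) (f s) s)
      (firstReach (hCut f c0 ch) (f t) t) = treeDist f s t := by
  obtain ⟨hsφ, hφs, hfs⟩ := hp.firstReach_spec_of_trimTime hf hpos hf0 hK hs
  obtain ⟨htφ, hφt, hft⟩ := hp.firstReach_spec_of_trimTime hf hpos hf0 hK ht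
  have hφ := hp.firstReach_mono_of_trimTime hf hpos hf0 hK hs ht hst
  set g := hCut f c0 ch
  set φs := firstReach g (f s) s
  set φt := firstReach g (f t) t
  obtain ⟨r, hr, hrmin⟩ := isCompact_Icc.exists_isMinOn (nonempty_Icc.2 hst) hf.continuousOn
  have hm : sInf (f '' Icc s t) = f r :=
    IsLeast.csInf_eq ⟨mem_image_of_mem f hr, forall_mem_image.2 fun x hx => hrmin hx⟩
  have hfr : ∀ y ∈ Icc s φt, f r ≤ f y := fun y hy => (le_total y t).elim
    (fun hyt => hrmin ⟨hy.1, hyt⟩) fun hty => (hrmin ⟨hst, le_rfl⟩).trans (hft y ⟨hty, hy.2⟩)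
  have hinf : sInf (g '' Icc φs φt) = f r := by
    refine le_antisymm ?_ (le_csInf ((nonempty_Icc.2 hφ).image g) (forall_mem_image.2
      fun x hx => hp.le_hCut_of_le hf hf0 hx.1 ((hrmin ⟨le_rfl, hst⟩).trans hφs.ge)
        fun y hy => hfr y ⟨hsφ.trans hy.1, hy.2.trans hx.2⟩))
    have hbdd := ((isCompact_Icc (a := φs) (b := φt)).image (hp.continuous_hCut hf)).bddBelow
    rcases lt_or_ge r φs with hrφ | hφr
    · calc sInf (g '' Icc φs φt) ≤ g φs := csInf_le hbdd (mem_image_of_mem g ⟨le_rfl, hφ⟩)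
        _ = f s := hφs
        _ ≤ f r := hfs r ⟨hr.1, hrφ.le⟩
    · calc sInf (g '' Icc φs φt) ≤ g r := csInf_le hbdd (mem_image_of_mem g ⟨hφr, hr.2.trans htφ⟩)
        _ ≤ f r := hp.hCut_le r
  rw [treeDist_of_le hφ, treeDist_of_le hst, hinf, hm, hφs, hφt]

theorem trimTime_of_hCut_eq (hp : SkorohodPair h f c0 ch) (hf : Continuous f)
    (hpos : ∀ t, 0 ≤ f t) {K : ℝ≥0} (hK : ∀ t, K ≤ t → f t = 0) (hsup : h ≤ sSup (range f))
    {s u : ℝ≥0} (hsu : s ≤ u) (hfs : f s = hCut f c0 ch u) (hfsu : ∀ x ∈ Icc s u, f s ≤ f x) :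
    TrimTime h f s := by
  rcases (hpos s).eq_or_lt with hs0 | hs0
  · exact trimTime_of_eq_zero hf hpos hK hsup hs0.symm
  obtain ⟨w, hwu, hw, hmono⟩ := hp.exists_last_top hf (hfs ▸ hs0)
  refine (trimTime_iff hf hpos hK).2 ⟨w, mem_ordConnectedComponent.2 fun x hx => ?_, ?_⟩
  · have hxu : x ≤ u := hx.2.trans (sup_le hsu hwu)
    rcases inf_le_iff.1 hx.1 with hsx | hwx
    · exact hfsu x ⟨hsx, hxu⟩
    · exact hfs ▸ (hmono x ⟨hwx, hxu⟩).trans (hp.hCut_le x)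
  · linarith [hmono w ⟨le_rfl, hwu⟩]

theorem exists_trimTime_treeDist_eq_zero (hp : SkorohodPair h f c0 ch) (hf : Continuous f)
    (hpos : ∀ t, 0 ≤ f t) (hf0 : f 0 = 0) {K : ℝ≥0} (hK : ∀ t, K ≤ t → f t = 0)
    (hsup : h ≤ sSup (range f)) (u : ℝ≥0) :
    ∃ s, TrimTime h f s ∧ treeDist (hCut f c0 ch) (firstReach (hCut f c0 ch) (f s) s) u = 0 := by
  obtain ⟨s, hs, hfs, hfsu⟩ := exists_last_eq_of_le hf zero_le
    (hf0 ▸ hp.hCut_nonneg hf hpos hf0 u) (hp.hCut_le u)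
  have hst : TrimTime h f s := hp.trimTime_of_hCut_eq hf hpos hK hsup hs.2 hfs
    fun x hx => hfs ▸ hfsu x hx
  obtain ⟨hsφ, hφs, -⟩ := hp.firstReach_spec_of_trimTime hf hpos hf0 hK hst
  have hφu : firstReach (hCut f c0 ch) (f s) s ≤ u := firstReach_le hs.2 hfs.le
  have hinf : sInf (hCut f c0 ch '' Icc (firstReach (hCut f c0 ch) (f s) s) u) = f s :=
    IsLeast.csInf_eq ⟨⟨u, ⟨hφu, le_rfl⟩, hfs.symm⟩, forall_mem_image.2 fun x hx =>
      hp.le_hCut_of_le hf hf0 hx.1 hφs.ge fun y hy =>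
        hfs ▸ hfsu y ⟨hsφ.trans hy.1, hy.2.trans hx.2⟩⟩
  refine ⟨s, hst, ?_⟩
  rw [treeDist_of_le hφu, hinf, hφs, ← hfs]
  ring

theorem treeDist_hCut_firstReach_zero (hp : SkorohodPair h f c0 ch) (hf : Continuous f)
    (hpos : ∀ t, 0 ≤ f t) (hf0 : f 0 = 0) {K : ℝ≥0} (hK : ∀ t, K ≤ t → f t = 0) {s : ℝ≥0}
    (hs : TrimTime h f s) (hroot : treeDist f s 0 = 0) :
    treeDist (hCut f c0 ch) (firstReach (hCut f c0 ch) (f s) s) 0 = 0 := by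
  rw [treeDist_zero_right hpos hf0] at hroot
  rw [treeDist_zero_right (hp.hCut_nonneg hf hpos hf0) (hp.hCut_zero hf0),
    (hp.firstReach_spec_of_trimTime hf hpos hf0 hK hs).2.1, hroot]

end SkorohodPair

theorem trimming_coded_by_h_cut_general
    (h : ℝ) (f c0 ch : ℝ≥0 → ℝ) (hf : Continuous f)
    (hpos : ∀ t, 0 ≤ f t) (hf0 : f 0 = 0) (K : ℝ≥0) (hK : ∀ t, K ≤ t → f t = 0)
    (hsup : h ≤ sSup (Set.range f))
    (hp : SkorohodPair h f c0 ch) :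
    ∃ φ : {t : ℝ≥0 // TrimTime h f t} → ℝ≥0,
      (∀ s u : {t : ℝ≥0 // TrimTime h f t},
        treeDist (fun v => f v - (f v + ch v + c0 v)) (φ s) (φ u) = treeDist f s.1 u.1) ∧
      (∀ u : ℝ≥0, ∃ s : {t : ℝ≥0 // TrimTime h f t},
        treeDist (fun v => f v - (f v + ch v + c0 v)) (φ s) u = 0) ∧
      (∀ s : {t : ℝ≥0 // TrimTime h f t}, treeDist f s.1 0 = 0 →
        treeDist (fun v => f v - (f v + ch v + c0 v)) (φ s) 0 = 0) := by
  refine ⟨fun s => firstReach (hCut f c0 ch) (f s) s, fun s u => ?_, fun u => ?_,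
    fun s => hp.treeDist_hCut_firstReach_zero hf hpos hf0 hK s.2⟩
  · rcases le_total s.1 u.1 with hsu | hus
    · exact hp.treeDist_hCut_firstReach hf hpos hf0 hK s.2 u.2 hsu
    · rw [treeDist_comm, treeDist_comm f]
      exact hp.treeDist_hCut_firstReach hf hpos hf0 hK u.2 s.2 hus
  · obtain ⟨s, hs, hd⟩ := hp.exists_trimTime_treeDist_eq_zero hf hpos hf0 hK hsup u
    exact ⟨⟨s, hs⟩, hd⟩

/-- **Theorem 2, item 2**: the `h`-trimming of the real tree coded by `f` is, up to a
root-preserving isometry, the real tree coded by the `h`-cut `f_h = f − Λ_{0,h}(f)`.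
This is expressed at the level of times: there is a map `φ` from trimming times to times
which is an isometry from `(Tr-times, d_f)` to `(ℝ≥0, d_{f_h})`, is surjective onto the
quotient tree `T_{f_h}`, and sends (representatives of) the root to the root. -/
theorem trimming_coded_by_h_cut
    (h : ℝ) (hh : 0 < h) (f c0 ch : ℝ≥0 → ℝ) (hf : Continuous f)
    (hpos : ∀ t, 0 ≤ f t) (hf0 : f 0 = 0) (K : ℝ≥0) (hK : ∀ t, K ≤ t → f t = 0)
    (hsup : h ≤ sSup (Set.range f))
    (hp : SkorohodPair h f c0 ch) :
    ∃ φ : {t : ℝ≥0 // TrimTime h f t} → ℝ≥0,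
      (∀ s u : {t : ℝ≥0 // TrimTime h f t},
        treeDist (fun v => f v - (f v + ch v + c0 v)) (φ s) (φ u) = treeDist f s.1 u.1) ∧
      (∀ u : ℝ≥0, ∃ s : {t : ℝ≥0 // TrimTime h f t},
        treeDist (fun v => f v - (f v + ch v + c0 v)) (φ s) u = 0) ∧
      (∀ s : {t : ℝ≥0 // TrimTime h f t}, treeDist f s.1 0 = 0 →
        treeDist (fun v => f v - (f v + ch v + c0 v)) (φ s) 0 = 0) :=
  trimming_coded_by_h_cut_general h f c0 ch hf hpos hf0 K hK hsup hp
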